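/- Let β be the symmetric bilinear form on ℝ⁴ with ordered basis (F, e₂, f₂, s) determined by β(F,F) = 0, β(e₂,e₂) = −1, β(f₂,f₂) = −1, β(s,s) = −2, β(F,s) = 1, and β(u,v) = 0 for every other pair of distinct basis vectors. Set e₁ = F − e₂, f₁ = F − f₂, D₂ = 2F + s, D₁ = 2F − e₂ + s, D₁′ = 2F − f₂ + s, and D₀ = 2F − e₂ − f₂ + s. Then {x ∈ ℝ⁴ : β(x, v) ≥ 0 for every v ∈ {s, e₁, e₂, f₁, f₂}} = cone({F, D₂, D₁, D₁′, D₀}). -/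

import Mathlib

/-!
Write `x = a F + b e₂ + c f₂ + d s`. Its intersection numbers with `s, e₁, e₂, f₁, f₂` are
`a - 2d, d + b, -b, d + c, -c`, so the dual cone is cut out by `2d ≤ a`, `0 ≤ -b ≤ d`,
`0 ≤ -c ≤ d`; each of `F, D₂, D₁, D₁′, D₀` satisfies these. Conversely, if `-b ≤ -c` then
`x = (a - 2d) F + (d + c) D₂ + (b - c) D₁′ - b D₀` has nonnegative coefficients, and
symmetrically with `D₁` when `-c ≤ -b`.
-/

def coneHull {E : Type*} [AddCommMonoid E] [Module ℝ E] (s : Set E) : Set E :=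
  {x | ∃ (n : ℕ) (c : Fin n → ℝ) (g : Fin n → E),
    (∀ i, 0 ≤ c i) ∧ (∀ i, g i ∈ s) ∧ x = ∑ i, c i • g i}

/-- The intersection form on `ℝ⁴` in the ordered basis `(F, e₂, f₂, s)` determined by
`β(F,F)=0`, `β(e₂,e₂)=−1`, `β(f₂,f₂)=−1`, `β(s,s)=−2`, `β(F,s)=1`, and `β = 0` on every
other pair of distinct basis vectors. -/
def interForm12 (x y : Fin 4 → ℝ) : ℝ :=
  x 0 * y 3 + x 3 * y 0 - x 1 * y 1 - x 2 * y 2 - 2 * (x 3 * y 3)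

open PointedCone

theorem coneHull_eq_hull {E : Type*} [AddCommMonoid E] [Module ℝ E] (s : Set E) :
    coneHull s = hull ℝ s := by
  ext x
  constructor
  · rintro ⟨n, c, g, hc, hg, rfl⟩
    exact Submodule.sum_mem _ fun i _ ↦ (hull ℝ s).smul_mem (hc i) (subset_hull (hg i))
  · intro hx
    obtain ⟨n, c, g, rfl⟩ := Submodule.mem_span_set'.mp hx
    exact ⟨n, fun i ↦ c i, fun i ↦ g i, fun i ↦ (c i).2, fun i ↦ (g i).2, rfl⟩

theorem interForm12_comm (x y : Fin 4 → ℝ) : interForm12 x y = interForm12 y x := by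
  unfold interForm12; ring

def interForm12Bilin : (Fin 4 → ℝ) →ₗ[ℝ] (Fin 4 → ℝ) →ₗ[ℝ] ℝ :=
  LinearMap.mk₂ ℝ interForm12
    (fun _ _ _ ↦ by simp only [interForm12, Pi.add_apply]; ring)
    (fun _ _ _ ↦ by simp only [interForm12, Pi.smul_apply, smul_eq_mul]; ring)
    (fun _ _ _ ↦ by simp only [interForm12, Pi.add_apply]; ring)
    (fun _ _ _ ↦ by simp only [interForm12, Pi.smul_apply, smul_eq_mul]; ring)

theorem interForm12Bilin_apply (x y : Fin 4 → ℝ) : interForm12Bilin x y = interForm12 x y := rfl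

theorem setOf_forall_nonneg_interForm12_eq_dual (S : Set (Fin 4 → ℝ)) :
    {x | ∀ v ∈ S, 0 ≤ interForm12 x v} = dual interForm12Bilin S := by
  ext x
  simp only [Set.mem_ofPred_eq, SetLike.mem_coe, mem_dual, interForm12Bilin_apply,
    interForm12_comm x]

theorem mem_dual_interForm12Bilin_iff {x : Fin 4 → ℝ} :
    x ∈ dual interForm12Bilin {![0, 0, 0, 1], ![1, -1, 0, 0], ![0, 1, 0, 0],
      ![1, 0, -1, 0], ![0, 0, 1, 0]} ↔
      2 * x 3 ≤ x 0 ∧ 0 ≤ x 3 + x 1 ∧ x 1 ≤ 0 ∧ 0 ≤ x 3 + x 2 ∧ x 2 ≤ 0 := by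
  simp only [mem_dual, Set.mem_insert_iff, Set.mem_singleton_iff, forall_eq_or_imp, forall_eq,
    interForm12Bilin_apply, interForm12]
  norm_num [Matrix.cons_val_two, Matrix.cons_val_three]

theorem mem_hull_of_nef_inequalities {x : Fin 4 → ℝ}
    (hx : 2 * x 3 ≤ x 0 ∧ 0 ≤ x 3 + x 1 ∧ x 1 ≤ 0 ∧ 0 ≤ x 3 + x 2 ∧ x 2 ≤ 0) :
    x ∈ hull ℝ {![1, 0, 0, 0], ![2, 0, 0, 1], ![2, -1, 0, 1], ![2, 0, -1, 1],
        ![2, -1, -1, 1]} := by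
  obtain ⟨hs, he₁, he₂, hf₁, hf₂⟩ := hx
  set C := hull ℝ ({![1, 0, 0, 0], ![2, 0, 0, 1], ![2, -1, 0, 1], ![2, 0, -1, 1],
    ![2, -1, -1, 1]} : Set (Fin 4 → ℝ))
  have hF : ![1, 0, 0, 0] ∈ C := subset_hull (by simp)
  have hD₂ : ![2, 0, 0, 1] ∈ C := subset_hull (by simp)
  have hD₁ : ![2, -1, 0, 1] ∈ C := subset_hull (by simp)
  have hD₁' : ![2, 0, -1, 1] ∈ C := subset_hull (by simp)
  have hD₀ : ![2, -1, -1, 1] ∈ C := subset_hull (by simp)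
  rcases le_total (x 1) (x 2) with h | h
  · have hx : x = (x 0 - 2 * x 3) • ![1, 0, 0, 0] + (x 3 + x 1) • ![2, 0, 0, 1]
        + (x 2 - x 1) • ![2, -1, 0, 1] + (-x 2) • ![2, -1, -1, 1] := by
      funext i
      fin_cases i <;> simp
      ring
    rw [hx]
    exact add_mem (add_mem (add_mem (C.smul_mem (by linarith) hF) (C.smul_mem he₁ hD₂))
      (C.smul_mem (by linarith) hD₁)) (C.smul_mem (by linarith) hD₀)
  · have hx : x = (x 0 - 2 * x 3) • ![1, 0, 0, 0] + (x 3 + x 2) • ![2, 0, 0, 1]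
        + (x 1 - x 2) • ![2, 0, -1, 1] + (-x 1) • ![2, -1, -1, 1] := by
      funext i
      fin_cases i <;> simp
      ring
    rw [hx]
    exact add_mem (add_mem (add_mem (C.smul_mem (by linarith) hF) (C.smul_mem hf₁ hD₂))
      (C.smul_mem (by linarith) hD₁')) (C.smul_mem (by linarith) hD₀)

theorem statement12 :
    {x : Fin 4 → ℝ | ∀ v ∈ ({![0, 0, 0, 1], ![1, -1, 0, 0], ![0, 1, 0, 0],
        ![1, 0, -1, 0], ![0, 0, 1, 0]} : Set (Fin 4 → ℝ)), 0 ≤ interForm12 x v} =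
      coneHull {![1, 0, 0, 0], ![2, 0, 0, 1], ![2, -1, 0, 1], ![2, 0, -1, 1],
        ![2, -1, -1, 1]} := by
  rw [setOf_forall_nonneg_interForm12_eq_dual, coneHull_eq_hull, SetLike.coe_set_eq]
  refine le_antisymm
    (fun x hx ↦ mem_hull_of_nef_inequalities (mem_dual_interForm12Bilin_iff.mp hx))
    (Submodule.span_le.mpr ?_)
  simp only [Set.insert_subset_iff, Set.singleton_subset_iff, SetLike.mem_coe,
    mem_dual_interForm12Bilin_iff]
  norm_num [Matrix.cons_val_two, Matrix.cons_val_three]
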